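/- With the setup of the Gambaudo–Ghys integration map, the map I_b^n commutes with the homogeneous coboundary: I_b^{n+1}(δⁿ c) = δⁿ(I_b^n(c)) for every bounded invariant cochain c ∈ C_b^n(H)^H, where δⁿ(f)(g₀,…,g_{n+1}) = Σᵢ (−1)ⁱ f(g₀,…,ĝᵢ,…,g_{n+1}). -/
import Mathlib


open MeasureTheory

/-- The homogeneous simplicial coboundary
`δⁿ(f)(g₀,…,g_{n+1}) = Σᵢ (−1)ⁱ f(g₀,…,ĝᵢ,…,g_{n+1})`. -/
def coboundary {A : Type*} (n : ℕ) (f : (Fin (n + 1) → A) → ℝ) :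
    (Fin (n + 2) → A) → ℝ :=
  fun x => ∑ i : Fin (n + 2), (-1 : ℝ) ^ (i : ℕ) * f (x ∘ i.succAbove)

/-- The Gambaudo–Ghys integration map `I_b` commutes with the homogeneous
coboundary: `I_b^{n+1}(δⁿ c) = δⁿ(I_b^n(c))`. -/
theorem stmt14 {G H X : Type*} [Group G] [Group H] [MulAction G X]
    [MeasurableSpace X] (μ : Measure X) [IsProbabilityMeasure μ]
    (hact : ∀ g : G, MeasurePreserving (fun x : X => g • x) μ μ)
    (γ : G → X → H)
    (hcoc : ∀ (f h : G) (x : X), γ (f * h) x = γ f (h • x) * γ h x)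
    (n : ℕ) (c : (Fin (n + 1) → H) → ℝ)
    (hbdd : ∃ C : ℝ, ∀ v, |c v| ≤ C)
    (hinvc : ∀ (k : H) (v : Fin (n + 1) → H), c (fun i => v i * k) = c v)
    (hint : ∀ v : Fin (n + 1) → G,
      Integrable (fun x => c fun i => γ (v i) x) μ) :
    ∀ g : Fin (n + 2) → G,
      ∫ x, coboundary n c (fun i => γ (g i) x) ∂μ =
        coboundary n (fun v : Fin (n + 1) → G => ∫ x, c (fun i => γ (v i) x) ∂μ) g := by
  intro g
  simp only [coboundary, Function.comp]
  rw [integral_finset_sum]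
  · exact Finset.sum_congr rfl fun i _ => by rw [integral_const_mul]; rfl
  · exact fun i _ => (hint fun j => g (i.succAbove j)).const_mul _
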